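/- Let f : [a,b] → ℝ be absolutely continuous with f'' ∈ L¹[a,b], and let a = x₀ < x₁ < ... < xₙ = b be a partition with hᵢ = x_{i+1} - xᵢ. Suppose |f''| is s-convex in the second sense on [a,b] for some s ∈ (0,1]. Let A = (1/4)·Σ_{i=0}^{n-1} hᵢ·[f(xᵢ) + 2f((xᵢ+x_{i+1})/2) + f(x_{i+1})] be the averaged midpoint-trapezoid quadrature. Then |∫_a^b f(x)dx − A| ≤ Σ_{i=0}^{n-1} (hᵢ³/(8(s+2)(s+3)))·[|f''((xᵢ+x_{i+1})/2)| + (|f''(xᵢ)| + |f''(x_{i+1})|)/2]. -/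

import Mathlib

/-!
The averaged midpoint–trapezoid rule on a cell `[u, v]` with midpoint `m` is the trapezoid rule
applied to both halves, so its error is the sum of two trapezoid errors. Integrating by parts
twice writes the trapezoid error on `[u, w]` as `∫ (t - u) (t - w) / 2 · f''(t) dt`; the
substitution `t = x w + (1 - x) u` turns this into
`-(w - u)³ / 2 · ∫₀¹ x (1 - x) f''(x w + (1 - x) u) dx`, where s-convexity bounds `|f''|` by
`x^s |f''(w)| + (1 - x)^s |f''(u)|`. The Beta-type integral
`∫₀¹ x^(s+1) (1 - x) dx = 1 / ((s + 2)(s + 3))` then gives the constant, and the composite bound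
follows by summing over the cells.
-/

open MeasureTheory Set intervalIntegral Real Finset

/-- `s`-convexity in the second sense (Breckner). -/
def SConvexOn (s : ℝ) (S : Set ℝ) (g : ℝ → ℝ) : Prop :=
  ∀ u ∈ S, ∀ v ∈ S, ∀ t ∈ Icc (0 : ℝ) 1, g (t * u + (1 - t) * v) ≤ t ^ s * g u + (1 - t) ^ s * g v

theorem SConvexOn.mono {s : ℝ} {S T : Set ℝ} {g : ℝ → ℝ} (hg : SConvexOn s S g) (hTS : T ⊆ S) :
    SConvexOn s T g :=
  fun u hu v hv t ht => hg u (hTS hu) v (hTS hv) t ht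

theorem integral_rpow_mul_mul_one_sub {s : ℝ} (hs : -1 < s) :
    ∫ x in (0 : ℝ)..1, x ^ s * (x * (1 - x)) = 1 / ((s + 2) * (s + 3)) := by
  have hsplit : EqOn (fun x : ℝ => x ^ s * (x * (1 - x))) (fun x => x ^ (s + 1) - x ^ (s + 2))
      (uIcc 0 1) := by
    intro x hx
    have hx0 : 0 ≤ x := by rw [Set.uIcc_of_le zero_le_one] at hx; exact hx.1
    have h1 : x ^ (s + 1) = x ^ s * x := rpow_add_one' hx0 (by linarith)
    have h2 : x ^ (s + 2) = x ^ (s + 1) * x := by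
      rw [show s + 2 = s + 1 + 1 by ring]; exact rpow_add_one' hx0 (by linarith)
    simp only [h2, h1]
    ring
  rw [integral_congr hsplit, integral_sub (intervalIntegrable_rpow' (by linarith))
      (intervalIntegrable_rpow' (by linarith)), integral_rpow (Or.inl (by linarith)),
    integral_rpow (Or.inl (by linarith)), zero_rpow (by linarith), zero_rpow (by linarith),
    one_rpow, one_rpow, show s + 1 + 1 = s + 2 by ring, show s + 2 + 1 = s + 3 by ring]
  have : s + 2 ≠ 0 := by linarith
  have : s + 3 ≠ 0 := by linarith
  field_simp
  ring

theorem integral_one_sub_rpow_mul_mul_one_sub {s : ℝ} (hs : -1 < s) :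
    ∫ x in (0 : ℝ)..1, (1 - x) ^ s * (x * (1 - x)) = 1 / ((s + 2) * (s + 3)) := by
  rw [← integral_rpow_mul_mul_one_sub hs]
  simpa [mul_comm] using
    integral_comp_sub_left (fun x : ℝ => x ^ s * (x * (1 - x))) (a := 0) (b := 1) 1

theorem abs_integral_mul_one_sub_mul_le {g : ℝ → ℝ} {s A B : ℝ} (hs : 0 ≤ s)
    (hg : ∀ x ∈ Icc (0 : ℝ) 1, |g x| ≤ x ^ s * A + (1 - x) ^ s * B) :
    |∫ x in (0 : ℝ)..1, x * (1 - x) * g x| ≤ (A + B) / ((s + 2) * (s + 3)) := by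
  have hA : Continuous fun x : ℝ => x ^ s * (x * (1 - x)) := by fun_prop
  have hB : Continuous fun x : ℝ => (1 - x) ^ s * (x * (1 - x)) := by fun_prop
  have hbound : Continuous fun x : ℝ =>
      A * (x ^ s * (x * (1 - x))) + B * ((1 - x) ^ s * (x * (1 - x))) :=
    (hA.const_mul A).add (hB.const_mul B)
  calc |∫ x in (0 : ℝ)..1, x * (1 - x) * g x|
      ≤ ∫ x in (0 : ℝ)..1, A * (x ^ s * (x * (1 - x))) + B * ((1 - x) ^ s * (x * (1 - x))) := by
        rw [← Real.norm_eq_abs]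
        refine norm_integral_le_of_norm_le zero_le_one (ae_of_all _ fun x hx => ?_)
          (hbound.intervalIntegrable _ _)
        have hx : x ∈ Icc (0 : ℝ) 1 := Ioc_subset_Icc_self hx
        rw [norm_mul, Real.norm_eq_abs, abs_of_nonneg (mul_nonneg hx.1 (sub_nonneg.2 hx.2))]
        calc x * (1 - x) * ‖g x‖ ≤ x * (1 - x) * (x ^ s * A + (1 - x) ^ s * B) := by
              gcongr
              · exact mul_nonneg hx.1 (sub_nonneg.2 hx.2)
              · exact hg x hx
          _ = _ := by ring
    _ = (A + B) / ((s + 2) * (s + 3)) := by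
        rw [integral_add ((hA.const_mul A).intervalIntegrable _ _)
            ((hB.const_mul B).intervalIntegrable _ _), intervalIntegral.integral_const_mul,
          intervalIntegral.integral_const_mul,
          integral_rpow_mul_mul_one_sub (by linarith),
          integral_one_sub_rpow_mul_mul_one_sub (by linarith)]
        ring

theorem integral_trapezoid_kernel_mul_eq (g : ℝ → ℝ) (u w : ℝ) :
    ∫ t in u..w, (t - u) * (t - w) / 2 * g t
      = -((w - u) ^ 3 / 2) * ∫ x in (0 : ℝ)..1, x * (1 - x) * g (x * w + (1 - x) * u) := by
  have := smul_integral_comp_mul_add (a := 0) (b := 1)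
    (fun t => (t - u) * (t - w) / 2 * g t) (w - u) u
  simp only [mul_zero, zero_add, mul_one, sub_add_cancel, smul_eq_mul] at this
  rw [← this, ← intervalIntegral.integral_const_mul, ← intervalIntegral.integral_const_mul]
  congr 1
  ext x
  rw [show (w - u) * x + u = x * w + (1 - x) * u by ring]
  ring

theorem integral_sub_trapezoid_eq {f f' f'' : ℝ → ℝ} {u w : ℝ} (huw : u ≤ w)
    (hf' : ∀ t ∈ Icc u w, HasDerivAt f (f' t) t)
    (hf'' : ∀ t ∈ Icc u w, HasDerivAt f' (f'' t) t)
    (hint : IntervalIntegrable f'' volume u w) :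
    (∫ t in u..w, f t) - (w - u) / 2 * (f u + f w)
      = ∫ t in u..w, (t - u) * (t - w) / 2 * f'' t := by
  have hderiv : ∀ t ∈ uIcc u w,
      HasDerivAt (fun t => (t - u) * (t - w) / 2 * f' t - (t - (u + w) / 2) * f t)
        ((t - u) * (t - w) / 2 * f'' t - f t) t := by
    intro t ht
    rw [Set.uIcc_of_le huw] at ht
    have hk : HasDerivAt (fun t : ℝ => (t - u) * (t - w) / 2) (t - (u + w) / 2) t :=
      ((((hasDerivAt_id' t).sub_const u).mul ((hasDerivAt_id' t).sub_const w)).div_const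
        2).congr_deriv (by ring)
    exact ((hk.mul (hf'' t ht)).sub
      (((hasDerivAt_id' t).sub_const ((u + w) / 2)).mul (hf' t ht))).congr_deriv (by ring)
  have hfint : IntervalIntegrable f volume u w :=
    ContinuousOn.intervalIntegrable_of_Icc huw fun t ht =>
      (hf' t ht).continuousAt.continuousWithinAt
  have hkint : IntervalIntegrable (fun t => (t - u) * (t - w) / 2 * f'' t) volume u w :=
    hint.continuousOn_mul (by fun_prop)
  have hftc := integral_eq_sub_of_hasDerivAt hderiv (hkint.sub hfint)
  rw [integral_sub hkint hfint] at hftc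
  linear_combination -hftc

theorem abs_integral_sub_trapezoid_le {f f' f'' : ℝ → ℝ} {s u w : ℝ} (hs : 0 ≤ s) (huw : u ≤ w)
    (hf' : ∀ t ∈ Icc u w, HasDerivAt f (f' t) t)
    (hf'' : ∀ t ∈ Icc u w, HasDerivAt f' (f'' t) t)
    (hint : IntervalIntegrable f'' volume u w)
    (hsc : SConvexOn s (Icc u w) fun t => |f'' t|) :
    |(∫ t in u..w, f t) - (w - u) / 2 * (f u + f w)|
      ≤ (w - u) ^ 3 / (2 * (s + 2) * (s + 3)) * (|f'' u| + |f'' w|) := by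
  have hc : 0 ≤ (w - u) ^ 3 / 2 := by have := sub_nonneg.2 huw; positivity
  rw [integral_sub_trapezoid_eq huw hf' hf'' hint, integral_trapezoid_kernel_mul_eq, abs_mul,
    abs_neg, abs_of_nonneg hc]
  calc (w - u) ^ 3 / 2 * |∫ x in (0 : ℝ)..1, x * (1 - x) * f'' (x * w + (1 - x) * u)|
      ≤ (w - u) ^ 3 / 2 * ((|f'' w| + |f'' u|) / ((s + 2) * (s + 3))) :=
        mul_le_mul_of_nonneg_left (abs_integral_mul_one_sub_mul_le hs
          fun x hx => hsc w ⟨huw, le_rfl⟩ u ⟨le_rfl, huw⟩ x hx) hc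
    _ = (w - u) ^ 3 / (2 * (s + 2) * (s + 3)) * (|f'' u| + |f'' w|) := by
        have : s + 2 ≠ 0 := by linarith
        have : s + 3 ≠ 0 := by linarith
        field_simp
        ring

theorem abs_integral_sub_bullen_le {f f' f'' : ℝ → ℝ} {s u v : ℝ} (hs : 0 ≤ s) (huv : u ≤ v)
    (hf' : ∀ t ∈ Icc u v, HasDerivAt f (f' t) t)
    (hf'' : ∀ t ∈ Icc u v, HasDerivAt f' (f'' t) t)
    (hint : IntervalIntegrable f'' volume u v)
    (hsc : SConvexOn s (Icc u v) fun t => |f'' t|) :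
    |(∫ t in u..v, f t) - 1 / 4 * ((v - u) * (f u + 2 * f ((u + v) / 2) + f v))|
      ≤ (v - u) ^ 3 / (8 * (s + 2) * (s + 3))
          * (|f'' ((u + v) / 2)| + (|f'' u| + |f'' v|) / 2) := by
  set m := (u + v) / 2 with hm
  have hmu : m - u = (v - u) / 2 := by rw [hm]; ring
  have hvm : v - m = (v - u) / 2 := by rw [hm]; ring
  have hum : u ≤ m := by linarith
  have hmv : m ≤ v := by linarith
  have hl : Icc u m ⊆ Icc u v := Icc_subset_Icc_right hmv
  have hr : Icc m v ⊆ Icc u v := Icc_subset_Icc_left hum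
  have hm_mem : m ∈ uIcc u v := Set.mem_uIcc_of_le hum hmv
  have hcont : ContinuousOn f (Icc u v) := fun t ht => (hf' t ht).continuousAt.continuousWithinAt
  have hleft := abs_integral_sub_trapezoid_le hs hum (fun t ht => hf' t (hl ht))
    (fun t ht => hf'' t (hl ht))
    (hint.mono_set (Set.uIcc_subset_uIcc Set.left_mem_uIcc hm_mem)) (hsc.mono hl)
  have hright := abs_integral_sub_trapezoid_le hs hmv (fun t ht => hf' t (hr ht))
    (fun t ht => hf'' t (hr ht))
    (hint.mono_set (Set.uIcc_subset_uIcc hm_mem Set.right_mem_uIcc)) (hsc.mono hr)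
  have hsplit : (∫ t in u..v, f t) - 1 / 4 * ((v - u) * (f u + 2 * f m + f v))
      = ((∫ t in u..m, f t) - (m - u) / 2 * (f u + f m))
        + ((∫ t in m..v, f t) - (v - m) / 2 * (f m + f v)) := by
    rw [← integral_add_adjacent_intervals ((hcont.mono hl).intervalIntegrable_of_Icc hum)
      ((hcont.mono hr).intervalIntegrable_of_Icc hmv), hmu, hvm]
    ring
  rw [hsplit]
  calc _ ≤ _ := abs_add_le _ _
    _ ≤ _ := add_le_add hleft hright
    _ = _ := by
        rw [hmu, hvm]
        have : s + 2 ≠ 0 := by linarith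
        have : s + 3 ≠ 0 := by linarith
        field_simp
        ring

theorem quadrature_error_sconvex_general (f f' f'' : ℝ → ℝ) (a b s : ℝ) (n : ℕ) (P : ℕ → ℝ)
    (hP0 : P 0 = a) (hPn : P n = b)
    (hPmono : ∀ i < n, P i < P (i + 1))
    (hs : s ∈ Set.Ioc (0:ℝ) 1)
    (hf' : ∀ t ∈ Set.Icc a b, HasDerivAt f (f' t) t)
    (hf'' : ∀ t ∈ Set.Icc a b, HasDerivAt f' (f'' t) t)
    (hint : IntegrableOn f'' (Set.Icc a b))
    (hsc : ∀ u ∈ Set.Icc a b, ∀ v ∈ Set.Icc a b, ∀ t ∈ Set.Icc (0:ℝ) 1,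
        |f'' (t * u + (1 - t) * v)| ≤ t ^ s * |f'' u| + (1 - t) ^ s * |f'' v|) :
    |(∫ t in a..b, f t)
        - (1 / 4) * ∑ i ∈ Finset.range n,
            (P (i + 1) - P i)
              * (f (P i) + 2 * f ((P i + P (i + 1)) / 2) + f (P (i + 1)))|
      ≤ ∑ i ∈ Finset.range n,
          ((P (i + 1) - P i) ^ 3 / (8 * (s + 2) * (s + 3)))
            * (|f'' ((P i + P (i + 1)) / 2)| + (|f'' (P i)| + |f'' (P (i + 1))|) / 2) := by
  have hsc' : SConvexOn s (Icc a b) fun t => |f'' t| := hsc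
  have hPmon : MonotoneOn P (Set.Iic n) := (strictMonoOn_Iic_of_lt_succ hPmono).monotoneOn
  have hsub : ∀ i < n, Icc (P i) (P (i + 1)) ⊆ Icc a b := fun i hi =>
    Set.Icc_subset_Icc (hP0 ▸ hPmon (Nat.zero_le n) hi.le (Nat.zero_le i))
      (hPn ▸ hPmon hi (le_refl n) hi)
  have hfint : ∀ i < n, IntervalIntegrable f volume (P i) (P (i + 1)) := fun i hi =>
    ContinuousOn.intervalIntegrable_of_Icc (hPmono i hi).le fun t ht =>
      (hf' t (hsub i hi ht)).continuousAt.continuousWithinAt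
  rw [← hP0, ← hPn, ← sum_integral_adjacent_intervals hfint, Finset.mul_sum,
    ← Finset.sum_sub_distrib]
  refine (Finset.abs_sum_le_sum_abs _ _).trans (Finset.sum_le_sum fun i hi => ?_)
  rw [Finset.mem_range] at hi
  exact abs_integral_sub_bullen_le hs.1.le (hPmono i hi).le (fun t ht => hf' t (hsub i hi ht))
    (fun t ht => hf'' t (hsub i hi ht))
    ((intervalIntegrable_iff_integrableOn_Icc_of_le (hPmono i hi).le).2
      (hint.mono_set (hsub i hi)))
    (hsc'.mono (hsub i hi))

theorem quadrature_error_sconvex (f f' f'' : ℝ → ℝ) (a b s : ℝ) (n : ℕ) (P : ℕ → ℝ)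
    (hab : a < b) (hn : 0 < n)
    (hP0 : P 0 = a) (hPn : P n = b)
    (hPmono : ∀ i < n, P i < P (i + 1))
    (hs : s ∈ Set.Ioc (0:ℝ) 1)
    (hf' : ∀ t ∈ Set.Icc a b, HasDerivAt f (f' t) t)
    (hf'' : ∀ t ∈ Set.Icc a b, HasDerivAt f' (f'' t) t)
    (hint : IntegrableOn f'' (Set.Icc a b))
    (hsc : ∀ u ∈ Set.Icc a b, ∀ v ∈ Set.Icc a b, ∀ t ∈ Set.Icc (0:ℝ) 1,
        |f'' (t * u + (1 - t) * v)| ≤ t ^ s * |f'' u| + (1 - t) ^ s * |f'' v|) :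
    |(∫ t in a..b, f t)
        - (1 / 4) * ∑ i ∈ Finset.range n,
            (P (i + 1) - P i)
              * (f (P i) + 2 * f ((P i + P (i + 1)) / 2) + f (P (i + 1)))|
      ≤ ∑ i ∈ Finset.range n,
          ((P (i + 1) - P i) ^ 3 / (8 * (s + 2) * (s + 3)))
            * (|f'' ((P i + P (i + 1)) / 2)| + (|f'' (P i)| + |f'' (P (i + 1))|) / 2) :=
  quadrature_error_sconvex_general f f' f'' a b s n P hP0 hPn hPmono hs hf' hf'' hint hsc
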